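/- arXiv:2308.02523 — 2 statements merged into one kernel-verified Lean document; each statement's English description precedes it below -/
import Mathlib

section
/- Let (X,⪯) be a partially ordered set and p a partial metric on X. Let f, g, S, T be self-maps of X such that f and g are dominated and S and T are dominating, and suppose there exist control functions ψ and φ such that for every two comparable elements x, y ∈ X, ψ(p(fx,gy)) ≤ ψ(M_p(x,y)) − φ(M_p(x,y)), where M_p(x,y) = max{p(Sx,Ty), p(fx,Sx), p(gy,Ty), (p(Sx,gy) + p(fx,Ty))/2}. Let {x_n} and {y_n} be sequences in X with y_{2n+1} = f x_{2n} = T x_{2n+1} and y_{2n+2} = g x_{2n+1} = S x_{2n+2} for all n ≥ 0. Then lim_{n,m→∞} p(y_n, y_m) = 0; in particular, {y_n} is a Cauchy sequence in (X,p). -/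
open Filter Topology Set MeasureTheory

/-- A partial metric on a set `X`. -/
def IsPartialMetric {X : Type*} (p : X → X → ℝ) : Prop :=
  (∀ x y, 0 ≤ p x y) ∧
  (∀ x y, x = y ↔ (p x x = p x y ∧ p y y = p x y)) ∧
  (∀ x y, p x x ≤ p x y) ∧
  (∀ x y, p x y = p y x) ∧
  (∀ x y z, p x z ≤ p x y + p y z - p y y)

/-- The induced metric `p^S`. -/
def pS {X : Type*} (p : X → X → ℝ) (x y : X) : ℝ := 2 * p x y - p x x - p y y

/-- Cauchy sequence in a partial metric space. -/
def PCauchy {X : Type*} (p : X → X → ℝ) (x : ℕ → X) : Prop :=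
  ∃ a : ℝ, Tendsto (fun nm : ℕ × ℕ => p (x nm.1) (x nm.2)) atTop (nhds a)

/-- Convergence of a sequence in a partial metric space (in the sense used for completeness). -/
def PConvergesTo {X : Type*} (p : X → X → ℝ) (x : ℕ → X) (l : X) : Prop :=
  Tendsto (fun nm : ℕ × ℕ => p (x nm.1) (x nm.2)) atTop (nhds (p l l)) ∧
  Tendsto (fun n => p (x n) l) atTop (nhds (p l l))

/-- Completeness of a partial metric space. -/
def PComplete {X : Type*} (p : X → X → ℝ) : Prop :=
  ∀ x : ℕ → X, PCauchy p x → ∃ l, PConvergesTo p x l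

/-- The control function ψ : [0,∞) → [0,∞): continuous, nondecreasing, ψ t = 0 ↔ t = 0. -/
def IsPsiControl (ψ : ℝ → ℝ) : Prop :=
  (∀ t, 0 ≤ t → 0 ≤ ψ t) ∧ ContinuousOn ψ (Ici 0) ∧ MonotoneOn ψ (Ici 0) ∧
  (∀ t, 0 ≤ t → (ψ t = 0 ↔ t = 0))

/-- The control function φ : [0,∞) → [0,∞): lower semicontinuous, φ t = 0 ↔ t = 0. -/
def IsPhiControl (φ : ℝ → ℝ) : Prop :=
  (∀ t, 0 ≤ t → 0 ≤ φ t) ∧ LowerSemicontinuousOn φ (Ici 0) ∧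
  (∀ t, 0 ≤ t → (φ t = 0 ↔ t = 0))

/-- (Sequential) continuity of a self-map on `(X, p^S)`. -/
def ContinuousPS {X : Type*} (p : X → X → ℝ) (f : X → X) : Prop :=
  ∀ (x : ℕ → X) (u : X), Tendsto (fun n => pS p (x n) u) atTop (nhds 0) →
    Tendsto (fun n => pS p (f (x n)) (f u)) atTop (nhds 0)

/-- Compatibility of a pair of self-maps. -/
def Compatible {X : Type*} (p : X → X → ℝ) (f S : X → X) : Prop :=
  ∀ (x : ℕ → X) (u : X),
    Tendsto (fun n => pS p (f (x n)) u) atTop (nhds 0) →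
    Tendsto (fun n => pS p (S (x n)) u) atTop (nhds 0) →
    Tendsto (fun n => pS p (f (S (x n))) (S (f (x n)))) atTop (nhds 0)

/-- Weak compatibility of a pair of self-maps. -/
def WeaklyCompatible {X : Type*} (f S : X → X) : Prop :=
  ∀ x, f x = S x → f (S x) = S (f x)

/-- Order condition (OC). -/
def OrderCondition {X : Type*} [PartialOrder X] (p : X → X → ℝ) : Prop :=
  ∀ (x y : ℕ → X) (u : X),
    (∀ n, x n ≤ y n) → (∀ n, x (n + 1) ≤ x n) →
    Tendsto (fun n => pS p (x n) u) atTop (nhds 0) →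
    ∀ n, u ≤ y n

/-- The quantity `M_p(x,y)` for four maps. -/
noncomputable def Mp {X : Type*} (p : X → X → ℝ) (f g S T : X → X) (x y : X) : ℝ :=
  max (max (p (S x) (T y)) (p (f x) (S x)))
      (max (p (g y) (T y)) ((p (S x) (g y) + p (f x) (T y)) / 2))

/-- The topology `τ_p` induced by a partial metric. -/
def tauP {X : Type*} (p : X → X → ℝ) : TopologicalSpace X :=
  TopologicalSpace.generateFrom {B | ∃ x ε, 0 < ε ∧ B = {y | p x y < p x x + ε}}

/-- Distance from a point to a set, `p(x,A)`. -/
noncomputable def pDist {X : Type*} (p : X → X → ℝ) (x : X) (A : Set X) : ℝ := sInf (p x '' A)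

/-- `δ_p(A,B)`. -/
noncomputable def deltaP {X : Type*} (p : X → X → ℝ) (A B : Set X) : ℝ :=
  sSup ((fun a => pDist p a B) '' A)

/-- The partial Hausdorff metric `H_p(A,B)`. -/
noncomputable def Hp {X : Type*} (p : X → X → ℝ) (A B : Set X) : ℝ :=
  max (deltaP p A B) (deltaP p B A)

/-- Boundedness of a subset of a partial metric space. -/
def PBounded {X : Type*} (p : X → X → ℝ) (A : Set X) : Prop :=
  ∃ x₀ M, (0:ℝ) ≤ M ∧ ∀ a ∈ A, p x₀ a < p a a + M

/-- Membership in `CB^p(X)`: nonempty, closed in `τ_p`, and bounded. -/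
def MemCBp {X : Type*} (p : X → X → ℝ) (A : Set X) : Prop :=
  A.Nonempty ∧ @IsClosed X (tauP p) A ∧ PBounded p A

/-- Cauchy sequence with respect to the induced metric `p^S`. -/
def MCauchy {X : Type*} (p : X → X → ℝ) (x : ℕ → X) : Prop :=
  ∀ ε : ℝ, 0 < ε → ∃ N, ∀ m ≥ N, ∀ n ≥ N, pS p (x m) (x n) < ε


section AuxLemmas

lemma aux_le {ψ φ : ℝ → ℝ} (hψ : IsPsiControl ψ) (hφ : IsPhiControl φ)
    {pv M : ℝ} (hpv : 0 ≤ pv) (hM : 0 ≤ M) (h : ψ pv ≤ ψ M - φ M) : pv ≤ M := by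
  by_contra hc
  push_neg at hc
  have h1 : ψ M ≤ ψ pv := hψ.2.2.1 hM hpv hc.le
  have h2 : φ M ≤ 0 := by linarith
  have h3 : φ M = 0 := le_antisymm h2 (hφ.1 M hM)
  have hM0 : M = 0 := (hφ.2.2 M hM).1 h3
  have h4 : ψ pv ≤ 0 := by
    have h0 : ψ 0 = 0 := (hψ.2.2.2 0 le_rfl).2 rfl
    have hφz : φ 0 = 0 := hM0 ▸ h3
    rw [hM0] at h; rw [h0] at h; linarith
  have h5 : ψ pv = 0 := le_antisymm h4 (hψ.1 pv hpv)
  have : pv = 0 := (hψ.2.2.2 pv hpv).1 h5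
  rw [hM0] at hc; linarith

lemma aux_min {φ : ℝ → ℝ} (hφ : IsPhiControl φ) {a b : ℝ} (ha : 0 < a) (_hab : a ≤ b) :
    ∃ c > 0, ∀ t, a ≤ t → t ≤ b → c ≤ φ t := by
  by_contra hc
  push_neg at hc
  have hseq : ∀ k : ℕ, ∃ t, (a ≤ t ∧ t ≤ b) ∧ φ t < 1 / (k + 1) := by
    intro k
    obtain ⟨t, ht1, ht2, ht3⟩ := hc (1 / (k + 1)) (by positivity)
    exact ⟨t, ⟨ht1, ht2⟩, ht3⟩
  choose t ht hφt using hseq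
  have hmem : ∀ k, t k ∈ Icc a b := fun k => ⟨(ht k).1, (ht k).2⟩
  obtain ⟨l, hl, σ, hσ, hσt⟩ := (isCompact_Icc (a := a) (b := b)).tendsto_subseq hmem
  have hl0 : 0 < φ l := by
    have hge := hφ.1 l (ha.le.trans hl.1)
    rcases hge.lt_or_eq with h | h
    · exact h
    · exact absurd ((hφ.2.2 l (ha.le.trans hl.1)).1 h.symm) (by linarith [hl.1] : l ≠ 0)
  have hlsc := hφ.2.1 l (mem_Ici.mpr (ha.le.trans hl.1))
  have hev : ∀ᶠ j in atTop, φ l / 2 < φ (t (σ j)) := by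
    have htend : Tendsto (fun j => t (σ j)) atTop (𝓝[Ici 0] l) := by
      apply tendsto_nhdsWithin_of_tendsto_nhds_of_eventually_within _ hσt
      exact Eventually.of_forall fun j => (ha.le.trans (hmem (σ j)).1)
    exact htend.eventually (hlsc (φ l / 2) (by linarith))
  have hev2 : ∀ᶠ j in atTop, φ (t (σ j)) < φ l / 2 := by
    have hto : Tendsto (fun j : ℕ => 1 / ((σ j : ℝ) + 1)) atTop (𝓝 0) :=
      tendsto_one_div_add_atTop_nhds_zero_nat.comp hσ.tendsto_atTop
    have h2 := hto.eventually (eventually_lt_nhds (by linarith : (0:ℝ) < φ l / 2))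
    filter_upwards [h2] with j hj
    exact lt_trans (hφt (σ j)) hj
  obtain ⟨j, h1, h2⟩ := (hev.and hev2).exists
  linarith

lemma aux_A {ψ φ : ℝ → ℝ} (hψ : IsPsiControl ψ) (hφ : IsPhiControl φ)
    {ε : ℝ} (hε : 0 < ε) :
    ∃ δ, 0 < δ ∧ δ ≤ ε ∧ ∀ pv M, 0 ≤ pv → 0 ≤ M → ψ pv ≤ ψ M - φ M → M ≤ ε + δ → pv < ε := by
  obtain ⟨c, hc, hcmin⟩ := aux_min hφ hε (by linarith : ε ≤ ε + ε)
  have hcont := hψ.2.1 ε (mem_Ici.mpr hε.le)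
  rw [Metric.continuousWithinAt_iff] at hcont
  obtain ⟨δ₀, hδ₀, hδ₀c⟩ := hcont (c / 2) (by linarith)
  refine ⟨min ε (δ₀ / 2), by positivity, min_le_left _ _, ?_⟩
  intro pv M hpv hM h hMle
  set δ := min ε (δ₀ / 2) with hδdef
  have hδε : δ ≤ ε := min_le_left _ _
  have hδδ₀ : δ < δ₀ := lt_of_le_of_lt (min_le_right _ _) (by linarith)
  rcases lt_or_ge M ε with hMε | hMε
  · exact lt_of_le_of_lt (aux_le hψ hφ hpv hM h) hMε
  · have hφM : c ≤ φ M := hcmin M hMε (by linarith)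
    have hψM : ψ M < ψ ε + c / 2 := by
      have hd := hδ₀c (mem_Ici.mpr hM) (by
        rw [Real.dist_eq, abs_lt]; constructor <;> linarith)
      rw [Real.dist_eq, abs_lt] at hd
      linarith [hd.1, hd.2]
    have hlt : ψ pv < ψ ε := by linarith
    by_contra hcon
    push_neg at hcon
    exact absurd (hψ.2.2.1 (mem_Ici.mpr hε.le) (mem_Ici.mpr hpv) hcon) (not_le.mpr hlt)

end AuxLemmas

/-- The iterative sequence `{y_n}` built in the proof of Theorem 2.1 satisfies
`lim_{n,m→∞} p(y_n,y_m) = 0`; in particular it is Cauchy in `(X,p)`. -/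
theorem iterative_sequence_cauchy
    {X : Type*} [PartialOrder X] (p : X → X → ℝ)
    (hp : IsPartialMetric p)
    (f g S T : X → X)
    (hf : ∀ x, f x ≤ x) (hg : ∀ x, g x ≤ x)
    (hS : ∀ x, x ≤ S x) (hT : ∀ x, x ≤ T x)
    (ψ φ : ℝ → ℝ) (hψ : IsPsiControl ψ) (hφ : IsPhiControl φ)
    (hcontr : ∀ x y : X, (x ≤ y ∨ y ≤ x) →
      ψ (p (f x) (g y)) ≤ ψ (Mp p f g S T x y) - φ (Mp p f g S T x y))
    (x y : ℕ → X)
    (hy1 : ∀ n, y (2 * n + 1) = f (x (2 * n)) ∧ f (x (2 * n)) = T (x (2 * n + 1)))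
    (hy2 : ∀ n, y (2 * n + 2) = g (x (2 * n + 1)) ∧ g (x (2 * n + 1)) = S (x (2 * n + 2))) :
    Tendsto (fun nm : ℕ × ℕ => p (y nm.1) (y nm.2)) atTop (nhds 0) ∧ PCauchy p y := by
  obtain ⟨hp0, hp1, hp2, hp3, hp4⟩ := hp
  have ptri : ∀ a b c : X, p a c ≤ p a b + p b c := by
    intro a b c
    have := hp4 a b c
    linarith [hp0 b b]
  -- the sequence x is decreasing
  have hxdec : ∀ k, x (k + 1) ≤ x k := by
    intro k
    rcases Nat.even_or_odd k with ⟨n, hn⟩ | ⟨n, hn⟩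
    · have e : k = 2 * n := by omega
      rw [e]
      calc x (2 * n + 1) ≤ T (x (2 * n + 1)) := hT _
        _ = f (x (2 * n)) := ((hy1 n).2).symm
        _ ≤ x (2 * n) := hf _
    · rw [hn]
      calc x (2 * n + 1 + 1) ≤ S (x (2 * n + 1 + 1)) := hS _
        _ = g (x (2 * n + 1)) := ((hy2 n).2).symm
        _ ≤ x (2 * n + 1) := hg _
  have hxanti : Antitone x := antitone_nat_of_succ_le hxdec
  have hcomp : ∀ i j : ℕ, x i ≤ x j ∨ x j ≤ x i := fun i j =>
    (le_total i j).elim (fun h => Or.inr (hxanti h)) (fun h => Or.inl (hxanti h))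
  -- identifications
  have hfy : ∀ a, f (x (2 * a)) = y (2 * a + 1) := fun a => (hy1 a).1.symm
  have hgy : ∀ b, g (x (2 * b + 1)) = y (2 * b + 2) := fun b => (hy2 b).1.symm
  have hTy : ∀ b, T (x (2 * b + 1)) = y (2 * b + 1) := fun b =>
    ((hy1 b).1.trans (hy1 b).2).symm
  have hSy : ∀ a, 1 ≤ a → S (x (2 * a)) = y (2 * a) := by
    intro a ha
    obtain ⟨a', rfl⟩ : ∃ a', a = a' + 1 := ⟨a - 1, by omega⟩
    have e : 2 * (a' + 1) = 2 * a' + 2 := by ring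
    rw [e]
    exact ((hy2 a').1.trans (hy2 a').2).symm
  -- specialized contraction
  have hK : ∀ a b : ℕ, 1 ≤ a →
      ψ (p (y (2*a+1)) (y (2*b+2))) ≤
        ψ (max (max (p (y (2*a)) (y (2*b+1))) (p (y (2*a+1)) (y (2*a))))
            (max (p (y (2*b+2)) (y (2*b+1)))
              ((p (y (2*a)) (y (2*b+2)) + p (y (2*a+1)) (y (2*b+1))) / 2))) -
        φ (max (max (p (y (2*a)) (y (2*b+1))) (p (y (2*a+1)) (y (2*a))))
            (max (p (y (2*b+2)) (y (2*b+1)))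
              ((p (y (2*a)) (y (2*b+2)) + p (y (2*a+1)) (y (2*b+1))) / 2))) := by
    intro a b ha
    have h := hcontr (x (2*a)) (x (2*b+1)) (hcomp _ _)
    simp only [Mp] at h
    rw [hfy a, hgy b, hTy b, hSy a ha] at h
    exact h
  -- Step 1: consecutive distances
  have hstep : ∀ n, 1 ≤ n →
      ψ (p (y (n+1)) (y (n+2))) ≤
        ψ (max (p (y n) (y (n+1))) (p (y (n+1)) (y (n+2)))) -
        φ (max (p (y n) (y (n+1))) (p (y (n+1)) (y (n+2)))) := by
    intro n hn
    rcases Nat.even_or_odd n with ⟨a, hna⟩ | ⟨b, hnb⟩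
    · have hn2 : n = 2*a := by omega
      have ha1 : 1 ≤ a := by omega
      have h := hK a a ha1
      have t1 : p (y (2*a+1)) (y (2*a)) = p (y (2*a)) (y (2*a+1)) := hp3 _ _
      have t2 : p (y (2*a+2)) (y (2*a+1)) = p (y (2*a+1)) (y (2*a+2)) := hp3 _ _
      have t3 := hp4 (y (2*a)) (y (2*a+1)) (y (2*a+2))
      have hMeq : max (max (p (y (2*a)) (y (2*a+1))) (p (y (2*a+1)) (y (2*a))))
            (max (p (y (2*a+2)) (y (2*a+1)))
              ((p (y (2*a)) (y (2*a+2)) + p (y (2*a+1)) (y (2*a+1))) / 2))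
          = max (p (y (2*a)) (y (2*a+1))) (p (y (2*a+1)) (y (2*a+2))) := by
        have l1 := le_max_left (p (y (2*a)) (y (2*a+1))) (p (y (2*a+1)) (y (2*a+2)))
        have l2 := le_max_right (p (y (2*a)) (y (2*a+1))) (p (y (2*a+1)) (y (2*a+2)))
        apply le_antisymm
        · exact max_le (max_le (by linarith) (by linarith))
            (max_le (by linarith) (by linarith))
        · have m1 := le_max_left (max (p (y (2*a)) (y (2*a+1))) (p (y (2*a+1)) (y (2*a))))
            (max (p (y (2*a+2)) (y (2*a+1)))
              ((p (y (2*a)) (y (2*a+2)) + p (y (2*a+1)) (y (2*a+1))) / 2))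
          have m2 := le_max_right (max (p (y (2*a)) (y (2*a+1))) (p (y (2*a+1)) (y (2*a))))
            (max (p (y (2*a+2)) (y (2*a+1)))
              ((p (y (2*a)) (y (2*a+2)) + p (y (2*a+1)) (y (2*a+1))) / 2))
          have m3 := le_max_left (p (y (2*a)) (y (2*a+1))) (p (y (2*a+1)) (y (2*a)))
          have m4 := le_max_left (p (y (2*a+2)) (y (2*a+1)))
            ((p (y (2*a)) (y (2*a+2)) + p (y (2*a+1)) (y (2*a+1))) / 2)
          exact max_le (by linarith) (by linarith)
      rw [hMeq] at h
      have e1 : n + 1 = 2*a+1 := by omega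
      have e2 : n + 2 = 2*a+2 := by omega
      rw [e1, e2, hn2]
      exact h
    · have h := hK (b+1) b (by omega)
      rw [show 2*(b+1) = 2*b+2 from by ring] at h
      have t1 : p (y (2*b+2)) (y (2*b+1)) = p (y (2*b+1)) (y (2*b+2)) := hp3 _ _
      have t2 : p (y (2*b+2+1)) (y (2*b+2)) = p (y (2*b+2)) (y (2*b+2+1)) := hp3 _ _
      have t3 := hp4 (y (2*b+2+1)) (y (2*b+2)) (y (2*b+1))
      have hMeq : max (max (p (y (2*b+2)) (y (2*b+1))) (p (y (2*b+2+1)) (y (2*b+2))))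
            (max (p (y (2*b+2)) (y (2*b+1)))
              ((p (y (2*b+2)) (y (2*b+2)) + p (y (2*b+2+1)) (y (2*b+1))) / 2))
          = max (p (y (2*b+1)) (y (2*b+2))) (p (y (2*b+2)) (y (2*b+2+1))) := by
        have l1 := le_max_left (p (y (2*b+1)) (y (2*b+2))) (p (y (2*b+2)) (y (2*b+2+1)))
        have l2 := le_max_right (p (y (2*b+1)) (y (2*b+2))) (p (y (2*b+2)) (y (2*b+2+1)))
        apply le_antisymm
        · exact max_le (max_le (by linarith) (by linarith))
            (max_le (by linarith) (by linarith))
        · have m1 := le_max_left (max (p (y (2*b+2)) (y (2*b+1))) (p (y (2*b+2+1)) (y (2*b+2))))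
            (max (p (y (2*b+2)) (y (2*b+1)))
              ((p (y (2*b+2)) (y (2*b+2)) + p (y (2*b+2+1)) (y (2*b+1))) / 2))
          have m3 := le_max_left (p (y (2*b+2)) (y (2*b+1))) (p (y (2*b+2+1)) (y (2*b+2)))
          have m4 := le_max_right (p (y (2*b+2)) (y (2*b+1))) (p (y (2*b+2+1)) (y (2*b+2)))
          exact max_le (by linarith) (by linarith)
      rw [hMeq] at h
      rw [t2] at h
      have e1 : n + 1 = 2*b+2 := by omega
      have e2 : n + 2 = 2*b+2+1 := by omega
      rw [e1, e2, hnb]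
      exact h
  have hd1 : ∀ n, 1 ≤ n → p (y (n+1)) (y (n+2)) ≤ p (y n) (y (n+1)) ∧
      ψ (p (y (n+1)) (y (n+2))) ≤ ψ (p (y n) (y (n+1))) - φ (p (y n) (y (n+1))) := by
    intro n hn
    have h := hstep n hn
    by_cases hle : p (y (n+1)) (y (n+2)) ≤ p (y n) (y (n+1))
    · rw [max_eq_left hle] at h
      exact ⟨hle, h⟩
    · push_neg at hle
      rw [max_eq_right hle.le] at h
      have h2 : φ (p (y (n+1)) (y (n+2))) ≤ 0 := by linarith
      have h0 := hφ.1 _ (hp0 (y (n+1)) (y (n+2)))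
      have hz : p (y (n+1)) (y (n+2)) = 0 :=
        (hφ.2.2 _ (hp0 _ _)).1 (le_antisymm h2 h0)
      have := hp0 (y n) (y (n+1))
      linarith
  have hdmono : ∀ m n, 1 ≤ m → m ≤ n → p (y n) (y (n+1)) ≤ p (y m) (y (m+1)) := by
    intro m n h1 hmn
    induction n, hmn using Nat.le_induction with
    | base => exact le_rfl
    | succ n hmn ih => exact le_trans (hd1 n (by omega)).1 ih
  have hdlim : ∀ δ : ℝ, 0 < δ → ∃ N, ∀ n, N ≤ n → p (y n) (y (n+1)) ≤ δ := by
    intro δ hδ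
    by_contra hcon
    push_neg at hcon
    have hall : ∀ n, 1 ≤ n → δ < p (y n) (y (n+1)) := by
      intro n hn
      obtain ⟨m, hm1, hm2⟩ := hcon n
      exact lt_of_lt_of_le hm2 (hdmono n m hn hm1)
    have hd1δ : δ < p (y 1) (y 2) := by
      have := hall 1 le_rfl
      norm_num at this
      exact this
    obtain ⟨c, hc, hcmin⟩ := aux_min hφ hδ hd1δ.le
    have hiter : ∀ k : ℕ, ψ (p (y (k+1)) (y (k+2))) ≤ ψ (p (y 1) (y 2)) - c * k := by
      intro k
      induction k with
      | zero => norm_num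
      | succ k ih =>
        have h := (hd1 (k+1) (by omega)).2
        have hub : p (y (k+1)) (y (k+2)) ≤ p (y 1) (y 2) := by
          have := hdmono 1 (k+1) le_rfl (by omega)
          norm_num at this
          exact this
        have hφc : c ≤ φ (p (y (k+1)) (y (k+2))) :=
          hcmin _ (hall (k+1) (by omega)).le hub
        push_cast
        push_cast at ih
        linarith
    obtain ⟨k, hk⟩ := exists_nat_gt (ψ (p (y 1) (y 2)) / c)
    have hck : ψ (p (y 1) (y 2)) < k * c := (div_lt_iff₀ hc).mp hk
    have hψ0 := hψ.1 _ (hp0 (y (k+1)) (y (k+2)))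
    have := hiter k
    linarith
  -- main Cauchy estimate
  have key : ∀ ε : ℝ, 0 < ε → ∃ N : ℕ, ∀ m n, N ≤ m → N ≤ n → p (y m) (y n) ≤ 2 * ε := by
    intro ε hε
    obtain ⟨δ, hδ0, hδε, haux⟩ := aux_A hψ hφ hε
    obtain ⟨N₀, hN₀⟩ := hdlim (δ/4) (by positivity)
    have hKey : ∀ a b : ℕ, 1 ≤ a →
        p (y (2*a)) (y (2*b+1)) ≤ ε + δ →
        p (y (2*a+1)) (y (2*a)) ≤ ε + δ →
        p (y (2*b+2)) (y (2*b+1)) ≤ ε + δ →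
        p (y (2*a)) (y (2*b+2)) + p (y (2*a+1)) (y (2*b+1)) ≤ 2*(ε + δ) →
        p (y (2*a+1)) (y (2*b+2)) < ε := by
      intro a b ha h1 h2 h3 h4
      refine haux _ _ (hp0 _ _) ?_ (hK a b ha) ?_
      · exact le_trans (hp0 _ _) (le_trans (le_max_left _ _) (le_max_left _ _))
      · exact max_le (max_le h1 h2) (max_le h3 (by linarith))
    refine ⟨N₀ + 3, ?_⟩
    have hQ : ∀ j, ∀ n, N₀ + 3 ≤ n → p (y n) (y (n + j)) ≤ ε + δ/4 ∧
        (Odd j → p (y n) (y (n + j)) < ε) := by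
      intro j
      induction j with
      | zero =>
        intro n hn
        constructor
        · have h1 := hp2 (y n) (y (n+1))
          have h2 := hN₀ n (by omega)
          have e : n + 0 = n := by omega
          rw [e]
          linarith
        · intro hodd
          exact absurd hodd (by decide)
      | succ j ih =>
        intro n hn
        rcases Nat.eq_zero_or_pos j with rfl | hj
        · have hdn := hN₀ n (by omega)
          have hlt : p (y n) (y (n + (0+1))) < ε := by
            have e : n + (0+1) = n + 1 := by omega
            rw [e]
            linarith
          exact ⟨by linarith, fun _ => hlt⟩
        · rcases Nat.even_or_odd (j+1) with heven | hodd
          · have hoddj : Odd j := Nat.Even.sub_odd (by omega) heven (odd_one)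
            have h1 := (ih n hn).2 hoddj
            have h2 := hN₀ (n + j) (by omega)
            have htr := ptri (y n) (y (n+j)) (y (n+j+1))
            constructor
            · have e : n + (j+1) = n + j + 1 := by omega
              rw [e]
              linarith
            · intro hoddj1
              exact absurd heven (Nat.not_even_iff_odd.mpr hoddj1)
          · obtain ⟨t, ht⟩ : ∃ t, j = 2*t := by
              rcases hodd with ⟨t, ht⟩; exact ⟨t, by omega⟩
            have ht1 : 1 ≤ t := by omega
            have hlt : p (y n) (y (n + (j+1))) < ε := by
              rcases Nat.even_or_odd n with hne | hno
              · -- n even : n = 2*b+2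
                obtain ⟨b, hnb⟩ : ∃ b, n = 2*b+2 := by
                  rcases hne with ⟨c, hc⟩; exact ⟨c - 1, by omega⟩
                have hdA : p (y (2*(b+t+1))) (y (2*(b+t+1)+1)) ≤ δ/4 :=
                  hN₀ (2*(b+t+1)) (by omega)
                have hdC : p (y (2*b+1)) (y (2*b+1+1)) ≤ δ/4 := hN₀ (2*b+1) (by omega)
                have hdC' : p (y (2*b+2)) (y (2*b+1)) ≤ δ/4 := by
                  rw [hp3]
                  exact hdC
                have hD : p (y (2*(b+t+1))) (y (2*b+2)) ≤ ε + δ/4 := by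
                  have hih := (ih n hn).1
                  have e : n + j = 2*(b+t+1) := by omega
                  rw [e, hnb] at hih
                  rw [hp3]
                  exact hih
                have hA : p (y (2*(b+t+1))) (y (2*b+1)) ≤ (ε + δ/4) + δ/4 := by
                  have tt := ptri (y (2*(b+t+1))) (y (2*b+2)) (y (2*b+1))
                  linarith
                have hB : p (y (2*(b+t+1)+1)) (y (2*(b+t+1))) ≤ δ/4 := by
                  rw [hp3]
                  exact hdA
                have hE : p (y (2*(b+t+1)+1)) (y (2*b+1)) ≤ δ/4 + ((ε + δ/4) + δ/4) := by
                  have tt := ptri (y (2*(b+t+1)+1)) (y (2*(b+t+1))) (y (2*b+1))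
                  linarith
                have hpv := hKey (b+t+1) b (by omega) (by linarith) (by linarith)
                  (by linarith) (by linarith)
                have e2 : n + (j+1) = 2*(b+t+1)+1 := by omega
                rw [e2, hnb, hp3]
                exact hpv
              · -- n odd : n = 2*a+1
                obtain ⟨a, hna⟩ : ∃ a, n = 2*a+1 := by
                  rcases hno with ⟨a, ha⟩; exact ⟨a, by omega⟩
                have ha1 : 1 ≤ a := by omega
                have hdA : p (y (2*a)) (y (2*a+1)) ≤ δ/4 := by
                  have := hN₀ (2*a) (by omega)
                  exact this
                have hdC : p (y (2*(a+t)+1)) (y (2*(a+t)+2)) ≤ δ/4 := by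
                  have := hN₀ (2*(a+t)+1) (by omega)
                  exact this
                have hE : p (y (2*a+1)) (y (2*(a+t)+1)) ≤ ε + δ/4 := by
                  have hih := (ih n hn).1
                  have e : n + j = 2*(a+t)+1 := by omega
                  rw [e, hna] at hih
                  exact hih
                have hA : p (y (2*a)) (y (2*(a+t)+1)) ≤ δ/4 + (ε + δ/4) := by
                  have tt := ptri (y (2*a)) (y (2*a+1)) (y (2*(a+t)+1))
                  linarith
                have hB : p (y (2*a+1)) (y (2*a)) ≤ δ/4 := by
                  rw [hp3]
                  exact hdA
                have hC : p (y (2*(a+t)+2)) (y (2*(a+t)+1)) ≤ δ/4 := by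
                  rw [hp3]
                  exact hdC
                have hD : p (y (2*a)) (y (2*(a+t)+2)) ≤ δ/4 + (ε + δ/4) + δ/4 := by
                  have tt1 := ptri (y (2*a)) (y (2*a+1)) (y (2*(a+t)+2))
                  have tt2 := ptri (y (2*a+1)) (y (2*(a+t)+1)) (y (2*(a+t)+2))
                  have tt3 : p (y (2*(a+t)+1)) (y (2*(a+t)+2)) ≤ δ/4 := hdC
                  linarith
                have hpv := hKey a (a+t) ha1 (by linarith) (by linarith)
                  (by linarith) (by linarith)
                have e2 : n + (j+1) = 2*(a+t)+2 := by omega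
                rw [e2, hna]
                exact hpv
            exact ⟨by linarith, fun _ => hlt⟩
    intro m n hm hn
    rcases le_total m n with h | h
    · obtain ⟨j, rfl⟩ := Nat.exists_eq_add_of_le h
      have := (hQ j m hm).1
      linarith
    · obtain ⟨j, rfl⟩ := Nat.exists_eq_add_of_le h
      have := (hQ j n hn).1
      rw [hp3]
      linarith
  have htend : Tendsto (fun nm : ℕ × ℕ => p (y nm.1) (y nm.2)) atTop (nhds 0) := by
    rw [Metric.tendsto_atTop]
    intro ε hε
    obtain ⟨N, hN⟩ := key (ε/3) (by linarith)
    refine ⟨(N, N), fun nm hnm => ?_⟩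
    have h1 : N ≤ nm.1 := hnm.1
    have h2 : N ≤ nm.2 := hnm.2
    have hb := hN nm.1 nm.2 h1 h2
    have h0 := hp0 (y nm.1) (y nm.2)
    rw [Real.dist_eq, sub_zero, abs_of_nonneg h0]
    linarith
  exact ⟨htend, 0, htend⟩
end

section
/- Let p be a complete partial metric on a nonempty set X and let f : X → X. Suppose there exist control functions ψ and φ such that for all x, y ∈ X, ψ(p(fx,fy)) ≤ ψ(M_p(x,y)) − φ(M_p(x,y)), where M_p(x,y) = max{p(x,y), p(x,fx), p(y,fy), p(f²x,y), p(f²x,fx), p(f²x,fy), (p(x,fy) + p(y,fx))/2}. Then f has a unique fixed point x* ∈ X, and for any x_0 ∈ X, the sequence x_0, f(x_0), f²(x_0), … converges to x* (that is, p(f^n(x_0), x*) → p(x*,x*)). -/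
open Filter Topology Set MeasureTheory

/-- The quantity `M_p(x,y)` for a single map (seven terms). -/
noncomputable def Mp1 {X : Type*} (p : X → X → ℝ) (f : X → X) (x y : X) : ℝ :=
  max (max (max (p x y) (p x (f x))) (max (p y (f y)) (p (f (f x)) y)))
      (max (max (p (f (f x)) (f x)) (p (f (f x)) (f y)))
           ((p x (f y) + p y (f x)) / 2))

/-! Along an orbit `xₙ₊₁ = f xₙ` the contraction makes `p(xₙ, xₙ₊₁)` decrease to `0`. Continuity
of `ψ` and lower semicontinuity of `φ` at a level `ε > 0` give a Meir–Keeler type gap: when `x`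
and `y` barely move under `f`, `p(fx, fy)` cannot land just above `ε`; this makes the orbit
Cauchy. Its limit `z` has `p(z, z) = 0`, and letting `n → ∞` in the contraction inequality at
`(xₙ, z)` gives `ψ d ≤ ψ d - φ d` for `d = p(z, fz)`, so `d = 0`. Two fixed points `z, w` give
`ψ d ≤ ψ d - φ d` for `d = p(z, w)` directly. -/

namespace IsPartialMetric

variable {X : Type*} {p : X → X → ℝ}

theorem nonneg (hp : IsPartialMetric p) (x y : X) : 0 ≤ p x y := hp.1 x y

theorem self_le (hp : IsPartialMetric p) (x y : X) : p x x ≤ p x y := hp.2.2.1 x y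

theorem symm (hp : IsPartialMetric p) (x y : X) : p x y = p y x := hp.2.2.2.1 x y

theorem triangle (hp : IsPartialMetric p) (x y z : X) : p x z ≤ p x y + p y z - p y y :=
  hp.2.2.2.2 x y z

theorem le_add (hp : IsPartialMetric p) (x y z : X) : p x z ≤ p x y + p y z := by
  linarith [hp.triangle x y z, hp.nonneg y y]

theorem eq_of_eq_zero (hp : IsPartialMetric p) {x y : X} (h : p x y = 0) : x = y := by
  have hx : p x x = 0 := le_antisymm (h ▸ hp.self_le x y) (hp.nonneg x x)
  have hy : p y y = 0 := le_antisymm (h ▸ hp.symm x y ▸ hp.self_le y x) (hp.nonneg y y)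
  exact (hp.2.1 x y).2 ⟨by rw [hx, h], by rw [hy, h]⟩

theorem abs_sub_le (hp : IsPartialMetric p) (x y z : X) : |p x z - p y z| ≤ p x y := by
  have h₁ := hp.triangle x y z
  have h₂ := hp.triangle y x z
  rw [abs_le]
  constructor <;> linarith [hp.symm x y, hp.nonneg x x, hp.nonneg y y]

theorem tendsto_of_tendsto_zero (hp : IsPartialMetric p) {ι : Type*} {l : Filter ι}
    {x : ι → X} {y : X} (h : Tendsto (fun i => p (x i) y) l (𝓝 0)) (z : X) :
    Tendsto (fun i => p (x i) z) l (𝓝 (p y z)) := by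
  rw [tendsto_iff_norm_sub_tendsto_zero]
  exact squeeze_zero (fun _ => norm_nonneg _) (fun i => hp.abs_sub_le (x i) y z) h

end IsPartialMetric

namespace IsPhiControl

variable {φ : ℝ → ℝ} {t : ℝ}

theorem pos (hφ : IsPhiControl φ) (ht : 0 < t) : 0 < φ t :=
  (hφ.1 t ht.le).lt_of_ne fun h => ht.ne' ((hφ.2.2 t ht.le).1 h.symm)

theorem eq_zero_of_nonpos (hφ : IsPhiControl φ) (ht : 0 ≤ t) (h : φ t ≤ 0) : t = 0 :=
  (hφ.2.2 t ht).1 (le_antisymm h (hφ.1 t ht))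

end IsPhiControl

section Control

variable {ψ φ : ℝ → ℝ}

theorem exists_pos_forall_sub_lt_of_control (hψ : ContinuousOn ψ (Ici 0))
    (hφ : IsPhiControl φ) {ε : ℝ} (hε : 0 < ε) :
    ∃ δ > 0, ∀ q M : ℝ, 0 ≤ q → 0 ≤ M → |q - ε| < δ → |M - ε| < δ → ψ M - φ M < ψ q := by
  have hφε := hφ.pos hε
  have hε' : ε ∈ Ici (0 : ℝ) := hε.le
  have hφ_near : ∀ᶠ t in 𝓝[Ici 0] ε, φ ε / 2 < φ t := hφ.2.1 ε hε' _ (half_lt_self hφε)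
  have hψ_near : ∀ᶠ t in 𝓝[Ici 0] ε, dist (ψ t) (ψ ε) < φ ε / 4 :=
    Metric.tendsto_nhds.1 (hψ ε hε') _ (by positivity)
  obtain ⟨δ, hδ, hball⟩ := Metric.mem_nhdsWithin_iff.1 (hφ_near.and hψ_near)
  refine ⟨δ, hδ, fun q M hq hM hqε hMε => ?_⟩
  obtain ⟨-, hψq⟩ := hball ⟨Metric.mem_ball.2 hqε, hq⟩
  obtain ⟨hφM, hψM⟩ := hball ⟨Metric.mem_ball.2 hMε, hM⟩
  rw [Real.dist_eq, abs_lt] at hψq hψM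
  linarith [hψq.1, hψM.2]

theorem eq_zero_of_tendsto_of_control (hψ : ContinuousOn ψ (Ici 0)) (hφ : IsPhiControl φ)
    {q M : ℕ → ℝ} {ε : ℝ} (hq₀ : ∀ n, 0 ≤ q n) (hM₀ : ∀ n, 0 ≤ M n)
    (hq : Tendsto q atTop (𝓝 ε)) (hM : Tendsto M atTop (𝓝 ε))
    (h : ∀ n, ψ (q n) ≤ ψ (M n) - φ (M n)) : ε = 0 := by
  have hε : 0 ≤ ε := ge_of_tendsto' hq hq₀
  by_contra hne
  obtain ⟨δ, hδ, hgap⟩ := exists_pos_forall_sub_lt_of_control hψ hφ (hε.lt_of_ne' hne)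
  have hnear : ∀ {u : ℕ → ℝ}, Tendsto u atTop (𝓝 ε) → ∀ᶠ n in atTop, |u n - ε| < δ :=
    fun hu => (Metric.tendsto_nhds.1 hu δ hδ).mono fun _ hn => by rwa [← Real.dist_eq]
  obtain ⟨n, hqn, hMn⟩ := ((hnear hq).and (hnear hM)).exists
  exact (hgap _ _ (hq₀ n) (hM₀ n) hqn hMn).not_ge (h n)

theorem tendsto_zero_of_control (hψ : ContinuousOn ψ (Ici 0)) (hφ : IsPhiControl φ)
    {a : ℕ → ℝ} (ha₀ : ∀ n, 0 ≤ a n) (ha : Antitone a)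
    (h : ∀ n, ψ (a (n + 1)) ≤ ψ (a n) - φ (a n)) : Tendsto a atTop (𝓝 0) := by
  have hlim := tendsto_atTop_ciInf ha ⟨0, by rintro _ ⟨n, rfl⟩; exact ha₀ n⟩
  rwa [eq_zero_of_tendsto_of_control hψ hφ (fun n => ha₀ (n + 1)) ha₀
    (hlim.comp (tendsto_add_atTop_nat 1)) hlim h] at hlim

end Control

def IsGeneralizedContraction {X : Type*} (p : X → X → ℝ) (f : X → X) (ψ φ : ℝ → ℝ) : Prop :=
  ∀ x y, ψ (p (f x) (f y)) ≤ ψ (Mp1 p f x y) - φ (Mp1 p f x y)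

section Mp1

variable {X : Type*} {p : X → X → ℝ} {f : X → X}

theorem le_Mp1 (x y : X) : p x y ≤ Mp1 p f x y :=
  le_max_of_le_left (le_max_of_le_left (le_max_left _ _))

theorem dist_apply_le_Mp1 (x y : X) : p y (f y) ≤ Mp1 p f x y :=
  le_max_of_le_left (le_max_of_le_right (le_max_left _ _))

theorem Mp1_nonneg (hp : IsPartialMetric p) (x y : X) : 0 ≤ Mp1 p f x y :=
  (hp.nonneg x y).trans (le_Mp1 x y)

theorem Mp1_apply_right (hp : IsPartialMetric p) (x : X) :
    Mp1 p f x (f x) = max (p x (f x)) (p (f x) (f (f x))) := by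
  refine le_antisymm ?_ (max_le (le_Mp1 _ _) (dist_apply_le_Mp1 _ _))
  have hba := hp.symm (f (f x)) (f x)
  have ha := le_max_left (p x (f x)) (p (f x) (f (f x)))
  have hb := le_max_right (p x (f x)) (p (f x) (f (f x)))
  simp only [Mp1, max_le_iff]
  refine ⟨⟨⟨?_, ?_⟩, ?_, ?_⟩, ⟨?_, ?_⟩, ?_⟩ <;>
    linarith [hp.self_le (f (f x)) (f x), hp.triangle x (f x) (f (f x))]

theorem Mp1_of_isFixedPt (hp : IsPartialMetric p) {z w : X}
    (hz : Function.IsFixedPt f z) (hw : Function.IsFixedPt f w) : Mp1 p f z w = p z w := by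
  refine le_antisymm ?_ (le_Mp1 z w)
  have hzw := hp.self_le z w
  have hwz : p w w ≤ p z w := hp.symm z w ▸ hp.self_le w z
  simp only [Mp1, hz.eq, hw.eq, max_le_iff]
  refine ⟨⟨⟨le_rfl, hzw⟩, hwz, le_rfl⟩, ⟨hzw, le_rfl⟩, ?_⟩
  linarith [hp.symm w z]

theorem abs_Mp1_sub_dist_le (hp : IsPartialMetric p) (x y : X) :
    |Mp1 p f x y - p (f x) (f y)| ≤ p x (f x) + p y (f y) + p (f x) (f (f x)) := by
  set d := p (f x) (f y)
  have hA := hp.nonneg x (f x)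
  have hB := hp.nonneg y (f y)
  have hC := hp.nonneg (f x) (f (f x))
  have hD := hp.nonneg (f x) (f y)
  have hxy : p x y ≤ p x (f x) + d + p y (f y) := by
    linarith [hp.le_add x (f x) y, hp.le_add (f x) (f y) y, hp.symm (f y) y]
  have hupper : Mp1 p f x y ≤ d + p x (f x) + p y (f y) + p (f (f x)) (f x) := by
    have hffx := hp.symm (f (f x)) (f x)
    simp only [Mp1, max_le_iff]
    refine ⟨⟨⟨by linarith, by linarith⟩, by linarith, ?_⟩, ⟨by linarith, ?_⟩, ?_⟩
    · linarith [hp.le_add (f (f x)) (f x) y, hp.le_add (f x) (f y) y, hp.symm (f y) y]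
    · linarith [hp.le_add (f (f x)) (f x) (f y)]
    · linarith [hp.le_add x (f x) (f y), hp.le_add y (f y) (f x), hp.symm (f y) (f x)]
  have hlower : d ≤ Mp1 p f x y + p x (f x) + p y (f y) := by
    linarith [le_Mp1 (p := p) (f := f) x y, hp.le_add (f x) x (f y), hp.le_add x y (f y),
      hp.symm (f x) x]
  rw [abs_le]
  constructor <;> linarith [hp.symm (f (f x)) (f x)]

theorem Mp1_le_dist_apply_add (hp : IsPartialMetric p) (x y : X) :
    Mp1 p f x y ≤ p y (f y) + (p x y + p (f x) y + p (f (f x)) y) := by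
  have hu := hp.nonneg x y
  have hv := hp.nonneg (f x) y
  have hw := hp.nonneg (f (f x)) y
  have hd := hp.nonneg y (f y)
  simp only [Mp1, max_le_iff]
  refine ⟨⟨⟨by linarith, ?_⟩, by linarith, by linarith⟩, ⟨?_, ?_⟩, ?_⟩
  · linarith [hp.le_add x y (f x), hp.symm y (f x)]
  · linarith [hp.le_add (f (f x)) y (f x), hp.symm y (f x)]
  · linarith [hp.le_add (f (f x)) y (f y)]
  · linarith [hp.le_add x y (f y), hp.symm y (f x)]

end Mp1

namespace IsGeneralizedContraction

variable {X : Type*} {p : X → X → ℝ} {f : X → X} {ψ φ : ℝ → ℝ}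

theorem eq_of_isFixedPt (hp : IsPartialMetric p) (hφ : IsPhiControl φ)
    (hf : IsGeneralizedContraction p f ψ φ) {z w : X}
    (hz : Function.IsFixedPt f z) (hw : Function.IsFixedPt f w) : w = z := by
  have h := hf z w
  rw [Mp1_of_isFixedPt hp hz hw, hz.eq, hw.eq] at h
  exact (hp.eq_of_eq_zero (hφ.eq_zero_of_nonpos (hp.nonneg z w) (by linarith))).symm

theorem dist_apply_apply_le (hp : IsPartialMetric p) (hφ : IsPhiControl φ)
    (hf : IsGeneralizedContraction p f ψ φ) (x : X) :
    p (f x) (f (f x)) ≤ p x (f x) ∧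
      ψ (p (f x) (f (f x))) ≤ ψ (p x (f x)) - φ (p x (f x)) := by
  have h := hf x (f x)
  rw [Mp1_apply_right hp] at h
  have hle : p (f x) (f (f x)) ≤ p x (f x) := by
    by_contra! hlt
    rw [max_eq_right hlt.le] at h
    have h₀ := hφ.eq_zero_of_nonpos (hp.nonneg _ _) (by linarith)
    linarith [hp.nonneg x (f x)]
  rw [max_eq_left hle] at h
  exact ⟨hle, h⟩

theorem tendsto_dist_succ (hp : IsPartialMetric p) (hψ : ContinuousOn ψ (Ici 0))
    (hφ : IsPhiControl φ) (hf : IsGeneralizedContraction p f ψ φ) {x : ℕ → X}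
    (hx : ∀ n, x (n + 1) = f (x n)) : Tendsto (fun n => p (x n) (x (n + 1))) atTop (𝓝 0) := by
  have hstep (n : ℕ) := hf.dist_apply_apply_le hp hφ (x n)
  simp only [← hx] at hstep
  exact tendsto_zero_of_control hψ hφ (fun n => hp.nonneg _ _)
    (antitone_nat_of_succ_le fun n => (hstep n).1) fun n => (hstep n).2

theorem exists_pos_dist_apply_lt (hp : IsPartialMetric p) (hψ : ContinuousOn ψ (Ici 0))
    (hφ : IsPhiControl φ) (hf : IsGeneralizedContraction p f ψ φ) {ε : ℝ} (hε : 0 < ε) :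
    ∃ δ > 0, ∀ x y, p x (f x) < δ → p y (f y) < δ → p (f x) (f (f x)) < δ →
      p (f x) (f y) < ε + δ → p (f x) (f y) < ε := by
  obtain ⟨δ, hδ, hgap⟩ := exists_pos_forall_sub_lt_of_control hψ hφ hε
  refine ⟨δ / 4, by positivity, fun x y hx hy hfx hlt => ?_⟩
  by_contra! hge
  have hM := abs_le.1 (abs_Mp1_sub_dist_le (f := f) hp x y)
  refine (hgap _ _ (hp.nonneg _ _) (Mp1_nonneg hp x y) ?_ ?_).not_ge (hf x y) <;>
    rw [abs_lt] <;> constructor <;> linarith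

theorem tendsto_dist_prod (hp : IsPartialMetric p) (hψ : ContinuousOn ψ (Ici 0))
    (hφ : IsPhiControl φ) (hf : IsGeneralizedContraction p f ψ φ) {x : ℕ → X}
    (hx : ∀ n, x (n + 1) = f (x n)) :
    Tendsto (fun nm : ℕ × ℕ => p (x nm.1) (x nm.2)) atTop (𝓝 0) := by
  rw [Metric.tendsto_atTop]
  intro ε hε
  obtain ⟨δ, hδ, hgap⟩ := hf.exists_pos_dist_apply_lt hp hψ hφ hε
  obtain ⟨N, hN⟩ := eventually_atTop.1 <|
    (hf.tendsto_dist_succ hp hψ hφ hx).eventually (gt_mem_nhds (lt_min hε hδ))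
  have hsmall (n : ℕ) (hn : N ≤ n) : p (x n) (f (x n)) < δ :=
    hx n ▸ (hN n hn).trans_le (min_le_right _ _)
  have hbound (n : ℕ) (hn : N ≤ n) (m : ℕ) (hm : n + 1 ≤ m) : p (x m) (x (n + 1)) < ε := by
    induction m, hm using Nat.le_induction with
    | base => exact (hp.self_le _ _).trans_lt ((hN _ (by omega)).trans_le (min_le_left _ _))
    | succ m hm ih =>
      have hmN : N ≤ m := by omega
      rw [hx m, hx n] at *
      refine hgap _ _ (hsmall m hmN) (hsmall n hn) (hx m ▸ hsmall (m + 1) (by omega)) ?_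
      calc p (f (x m)) (f (x n)) ≤ p (f (x m)) (x m) + p (x m) (f (x n)) := hp.le_add _ _ _
        _ < δ + ε := by linarith [hp.symm (f (x m)) (x m), hsmall m hmN]
        _ = ε + δ := add_comm δ ε
  refine ⟨(N + 1, N + 1), fun ⟨m, n⟩ ⟨hm, hn⟩ => ?_⟩
  simp only at hm hn
  rw [Real.dist_eq, sub_zero, abs_of_nonneg (hp.nonneg _ _)]
  obtain ⟨k, rfl⟩ : ∃ k, n = k + 1 := ⟨n - 1, by omega⟩
  rcases le_total (k + 1) m with hkm | hmk
  · exact hbound k (by omega) m hkm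
  · obtain ⟨j, rfl⟩ : ∃ j, m = j + 1 := ⟨m - 1, by omega⟩
    exact hp.symm (x (j + 1)) (x (k + 1)) ▸ hbound j (by omega) (k + 1) hmk

theorem isFixedPt_of_tendsto (hp : IsPartialMetric p) (hψ : ContinuousOn ψ (Ici 0))
    (hφ : IsPhiControl φ) (hf : IsGeneralizedContraction p f ψ φ) {x : ℕ → X}
    (hx : ∀ n, x (n + 1) = f (x n)) {z : X} (hz : Tendsto (fun n => p (x n) z) atTop (𝓝 0)) :
    Function.IsFixedPt f z := by
  have hz₁ := hz.comp (tendsto_add_atTop_nat 1)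
  have hz₂ := hz.comp (tendsto_add_atTop_nat 2)
  have hM : Tendsto (fun n => Mp1 p f (x n) z) atTop (𝓝 (p z (f z))) := by
    refine tendsto_of_tendsto_of_tendsto_of_le_of_le tendsto_const_nhds ?_
      (fun n => dist_apply_le_Mp1 _ _) fun n => Mp1_le_dist_apply_add hp (x n) z
    simpa only [Function.comp_def, ← hx, add_zero] using
      tendsto_const_nhds.add ((hz.add hz₁).add hz₂)
  have hq : Tendsto (fun n => p (f (x n)) (f z)) atTop (𝓝 (p z (f z))) := by
    simpa only [Function.comp_def, ← hx] using hp.tendsto_of_tendsto_zero hz₁ (f z)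
  have hd := eq_zero_of_tendsto_of_control hψ hφ (fun n => hp.nonneg _ _)
    (fun n => Mp1_nonneg hp _ _) hq hM fun n => hf (x n) z
  exact (hp.eq_of_eq_zero hd).symm

theorem exists_isFixedPt_tendsto (hp : IsPartialMetric p) (hcomplete : PComplete p)
    (hψ : ContinuousOn ψ (Ici 0)) (hφ : IsPhiControl φ) (hf : IsGeneralizedContraction p f ψ φ)
    (x₀ : X) :
    ∃ z, Function.IsFixedPt f z ∧ p z z = 0 ∧
      Tendsto (fun n => p (f^[n] x₀) z) atTop (𝓝 0) := by
  have hx (n : ℕ) : f^[n + 1] x₀ = f (f^[n] x₀) := Function.iterate_succ_apply' f n x₀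
  have hcauchy := hf.tendsto_dist_prod hp hψ hφ (x := fun n => f^[n] x₀) hx
  obtain ⟨z, hz_prod, hz⟩ := hcomplete (fun n => f^[n] x₀) ⟨0, hcauchy⟩
  have hzz : p z z = 0 := tendsto_nhds_unique hz_prod hcauchy
  rw [hzz] at hz
  exact ⟨z, hf.isFixedPt_of_tendsto hp hψ hφ hx hz, hzz, hz⟩

end IsGeneralizedContraction

/-- Corollary 4.9 (fixed point of a single generalized `(ψ,φ)`-contraction). -/
theorem single_map_generalized_contraction_fixed_point
    {X : Type*} [Nonempty X] (p : X → X → ℝ)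
    (hp : IsPartialMetric p) (hcomplete : PComplete p)
    (f : X → X)
    (ψ φ : ℝ → ℝ) (hψ : IsPsiControl ψ) (hφ : IsPhiControl φ)
    (hcontr : ∀ x y : X, ψ (p (f x) (f y)) ≤ ψ (Mp1 p f x y) - φ (Mp1 p f x y)) :
    ∃ z : X, f z = z ∧ (∀ w : X, f w = w → w = z) ∧
      ∀ x₀ : X, Tendsto (fun n => p (f^[n] x₀) z) atTop (nhds (p z z)) := by
  have hf : IsGeneralizedContraction p f ψ φ := hcontr
  obtain ⟨z, hz, hzz, -⟩ :=
    hf.exists_isFixedPt_tendsto hp hcomplete hψ.2.1 hφ (Classical.arbitrary X)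
  refine ⟨z, hz, fun w hw => hf.eq_of_isFixedPt hp hφ hz hw, fun x₀ => ?_⟩
  obtain ⟨z', hz', -, hlim⟩ := hf.exists_isFixedPt_tendsto hp hcomplete hψ.2.1 hφ x₀
  rwa [hzz, ← hf.eq_of_isFixedPt hp hφ hz hz']
end
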